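/- Define the expectation functional E_ν[f] = (1/(ν+1))·[f(D)](ν+1) where D = ((ν²−1)/2)·(d/dν) and f is a polynomial, meaning for f(x) = x^k the value is (1/(ν+1))·D^k(ν+1). Then for each positive integer k, E_ν[x^k] = (k!/2^k)·ν^k + h_k(ν), where h_k is a polynomial in ν of degree at most k−1. -/

import Mathlib

/-!
Since `ν² − 1 = (ν + 1)(ν − 1)`, the factor `ν + 1` survives every application of `D`:
`D^k(ν + 1) = (ν + 1) Q_k(ν)` with `Q_0 = 1` and `Q_{k+1} = ((ν − 1) Q_k + (ν² − 1) Q_k') / 2`.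
Comparing coefficients, `deg Q_k ≤ k` and each step multiplies the coefficient of the top
power by `(k + 1) / 2`, so that coefficient is `k! / 2^k`.
-/
open Polynomial

noncomputable def momentStep (q : ℝ[X]) : ℝ[X] :=
  C (1 / 2) * ((X - 1) * q + (X ^ 2 - 1) * derivative q)

noncomputable def momentPoly (n : ℕ) : ℝ[X] := momentStep^[n] 1

lemma momentPoly_succ (n : ℕ) : momentPoly (n + 1) = momentStep (momentPoly n) :=
  Function.iterate_succ_apply' momentStep n 1

lemma coeff_momentStep_succ (q : ℝ[X]) (m : ℕ) :
    (momentStep q).coeff (m + 1)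
      = ((m + 1) * q.coeff m - q.coeff (m + 1) - (m + 2) * q.coeff (m + 2)) / 2 := by
  have hX2 : (X ^ 2 - 1 : ℝ[X]) * derivative q = X * (X * derivative q) - derivative q := by ring
  have hXq' : (X * derivative q).coeff m = m * q.coeff m := by
    rcases m with _ | m
    · simp
    · rw [coeff_X_mul, coeff_derivative]; push_cast; ring
  rw [momentStep, coeff_C_mul, coeff_add, sub_mul, hX2, coeff_sub, coeff_sub, coeff_X_mul,
    one_mul, coeff_X_mul, hXq', coeff_derivative]
  push_cast
  ring

lemma natDegree_momentStep_le {q : ℝ[X]} {n : ℕ} (hq : q.natDegree ≤ n) :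
    (momentStep q).natDegree ≤ n + 1 := by
  rw [natDegree_le_iff_coeff_eq_zero] at hq ⊢
  rintro (_ | m) hm
  · omega
  · rw [coeff_momentStep_succ, hq m (by omega), hq (m + 1) (by omega), hq (m + 2) (by omega)]
    ring

lemma coeff_momentStep_of_natDegree_le {q : ℝ[X]} {n : ℕ} (hq : q.natDegree ≤ n) :
    (momentStep q).coeff (n + 1) = (n + 1) / 2 * q.coeff n := by
  rw [natDegree_le_iff_coeff_eq_zero] at hq
  rw [coeff_momentStep_succ, hq (n + 1) (by omega), hq (n + 2) (by omega)]
  ring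

lemma natDegree_momentPoly_le (n : ℕ) : (momentPoly n).natDegree ≤ n := by
  induction n with
  | zero => simp [momentPoly]
  | succ n ih =>
    rw [momentPoly_succ]
    exact natDegree_momentStep_le ih

lemma coeff_momentPoly_self (n : ℕ) : (momentPoly n).coeff n = n.factorial / 2 ^ n := by
  induction n with
  | zero => simp [momentPoly]
  | succ n ih =>
    rw [momentPoly_succ, coeff_momentStep_of_natDegree_le (natDegree_momentPoly_le n), ih,
      Nat.factorial_succ]
    push_cast
    ring

lemma natDegree_sub_C_mul_X_pow_le {R : Type*} [Ring R] {p : R[X]} {n : ℕ}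
    (hp : p.natDegree ≤ n) : (p - C (p.coeff n) * X ^ n).natDegree ≤ n - 1 := by
  rw [natDegree_le_iff_coeff_eq_zero] at hp ⊢
  intro m hm
  rw [coeff_sub, coeff_C_mul_X_pow]
  rcases (show n ≤ m by omega).eq_or_lt with rfl | hnm
  · simp
  · rw [if_neg hnm.ne', hp m hnm, sub_zero]

lemma deriv_mul_momentStep (q : ℝ[X]) :
    (fun x : ℝ => (x ^ 2 - 1) / 2 * deriv (fun y => (y + 1) * q.eval y) x)
      = fun x => (x + 1) * (momentStep q).eval x := by
  funext x
  have h := Polynomial.deriv (x := x) ((X + 1) * q)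
  simp only [eval_mul, eval_add, eval_X, eval_one, derivative_mul, derivative_add,
    derivative_X, derivative_one, eval_zero] at h
  rw [h, momentStep]
  simp only [eval_mul, eval_add, eval_sub, eval_pow, eval_X, eval_one, eval_C]
  ring

lemma iterate_D_eq_mul_momentPoly (n : ℕ) :
    (fun f : ℝ → ℝ => fun x => (x ^ 2 - 1) / 2 * deriv f x)^[n] (fun x => x + 1)
      = fun x => (x + 1) * (momentPoly n).eval x := by
  induction n with
  | zero => simp [momentPoly]
  | succ n ih =>
    rw [Function.iterate_succ_apply', ih, deriv_mul_momentStep, momentPoly_succ]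

theorem stmt14_general (k : ℕ) :
    ∃ h : Polynomial ℝ, h.natDegree ≤ k - 1 ∧
      ∀ ν : ℝ, 1 < ν →
        (1 / (ν + 1)) *
            ((fun f : ℝ → ℝ => fun x => (x ^ 2 - 1) / 2 * deriv f x)^[k]
              (fun x => x + 1)) ν
          = (Nat.factorial k : ℝ) / 2 ^ k * ν ^ k + h.eval ν := by
  refine ⟨momentPoly k - C ((k.factorial : ℝ) / 2 ^ k) * X ^ k, ?_, fun ν hν => ?_⟩
  · simpa only [coeff_momentPoly_self] using
      natDegree_sub_C_mul_X_pow_le (natDegree_momentPoly_le k)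
  · have hν1 : ν + 1 ≠ 0 := by linarith
    rw [iterate_D_eq_mul_momentPoly, ← mul_assoc, one_div_mul_cancel hν1, one_mul]
    simp

/-- with `D = ((ν²−1)/2)·d/dν` and
`E_ν[x^k] = (1/(ν+1))·D^k(ν+1)`, for each `k ≥ 1` one has
`E_ν[x^k] = (k!/2^k)·ν^k + h_k(ν)` with `h_k` a polynomial of degree ≤ k−1. -/
theorem stmt14 (k : ℕ) (hk : 1 ≤ k) :
    ∃ h : Polynomial ℝ, h.natDegree ≤ k - 1 ∧
      ∀ ν : ℝ, 1 < ν →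
        (1 / (ν + 1)) *
            ((fun f : ℝ → ℝ => fun x => (x ^ 2 - 1) / 2 * deriv f x)^[k]
              (fun x => x + 1)) ν
          = (Nat.factorial k : ℝ) / 2 ^ k * ν ^ k + h.eval ν :=
  stmt14_general k
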